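/- Let n ≥ 2, a ≥ 1, let D ⊊ ℝⁿ be a domain, D' ⊊ ℝⁿ a c-uniform domain (c ≥ 1), and f : D → D' an (M,C)-CQH homeomorphism. Let β be a rectifiable arc in D satisfying ℓ_k(β[s₁,s₂]) ≤ 4a²·k_D(s₁,s₂) + 4a² for all s₁, s₂ ∈ β. Let p, q ∈ β with q following p, let w ∈ β[p,q] be a point with d'(f(w)) = sup{d'(f(u)) : u ∈ β}, and suppose d'(f(p)) ≥ d'(f(w))/2 and d'(f(q)) ≥ d'(f(w))/2. Then there exists a₂ > 0, depending only on a, c, M, C, such that for every z ∈ β[p,q]: (1) d'(f(w)) ≤ a₂·d'(f(z)); (2) |f(p) − f(q)| ≤ a₂·d'(f(z)); (3) max{|f(p) − f(z)|, |f(q) − f(z)|} ≤ a₂·d'(f(z)). (This is Corollary 3.9.) -/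

import Mathlib

open Set Metric MeasureTheory

noncomputable section

/-- Distance from a point to the boundary of `D`, i.e. to its complement. -/
def distBd {n : ℕ} (D : Set (EuclideanSpace ℝ (Fin n))) (z : EuclideanSpace ℝ (Fin n)) : ℝ :=
  infDist z Dᶜ

/-- A domain in ℝⁿ: a nonempty, open, connected, proper subset. -/
def IsProperDomain {n : ℕ} (D : Set (EuclideanSpace ℝ (Fin n))) : Prop :=
  IsOpen D ∧ IsConnected D ∧ D ≠ univ

/-- A rectifiable arc in `D`, parametrized by arclength on `[0, len]`:
the length of the subarc between parameters `s ≤ t` is exactly `t - s`. -/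
structure Arc (n : ℕ) (D : Set (EuclideanSpace ℝ (Fin n))) where
  len : ℝ
  len_nonneg : 0 ≤ len
  toFun : ℝ → EuclideanSpace ℝ (Fin n)
  injOn : InjOn toFun (Icc 0 len)
  mem : ∀ t ∈ Icc 0 len, toFun t ∈ D
  unitSpeed : ∀ s ∈ Icc 0 len, ∀ t ∈ Icc 0 len, s ≤ t →
    eVariationOn toFun (Icc s t) = ENNReal.ofReal (t - s)

namespace Arc

variable {n : ℕ} {D : Set (EuclideanSpace ℝ (Fin n))}

/-- The arc `γ` joins `x` to `y`. -/
def Joins (γ : Arc n D) (x y : EuclideanSpace ℝ (Fin n)) : Prop :=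
  γ.toFun 0 = x ∧ γ.toFun γ.len = y

/-- Quasihyperbolic length of the subarc of `γ` between parameters `u` and `v`:
`∫ |dz| / d(z)` along the (unit-speed) subarc. -/
def qhLen (γ : Arc n D) (u v : ℝ) : ℝ :=
  ∫ t in u..v, 1 / distBd D (γ.toFun t)

end Arc

/-- Quasihyperbolic distance in `D`. -/
def qhDist {n : ℕ} (D : Set (EuclideanSpace ℝ (Fin n))) (x y : EuclideanSpace ℝ (Fin n)) : ℝ :=
  sInf { r | ∃ γ : Arc n D, γ.Joins x y ∧ r = γ.qhLen 0 γ.len }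

/-- Inner (internal) distance in `D`: infimum of lengths of arcs joining the two points. -/
def innerDist {n : ℕ} (D : Set (EuclideanSpace ℝ (Fin n))) (x y : EuclideanSpace ℝ (Fin n)) : ℝ :=
  sInf { r | ∃ γ : Arc n D, γ.Joins x y ∧ r = γ.len }

namespace Arc

variable {n : ℕ} {D : Set (EuclideanSpace ℝ (Fin n))}

/-- `γ` is a quasihyperbolic geodesic: its quasihyperbolic length realizes the
quasihyperbolic distance between its endpoints. -/
def IsGeodesic (γ : Arc n D) : Prop :=
  γ.qhLen 0 γ.len = qhDist D (γ.toFun 0) (γ.toFun γ.len)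

/-- `γ` is a `c`-cone arc: `min (ℓ(γ[z₁,z]), ℓ(γ[z₂,z])) ≤ c·d(z)` for all `z ∈ γ`. -/
def IsConeArc (γ : Arc n D) (c : ℝ) : Prop :=
  ∀ t ∈ Icc 0 γ.len, min t (γ.len - t) ≤ c * distBd D (γ.toFun t)

end Arc

/-- `D` is an `a`-John domain. -/
def IsJohn {n : ℕ} (D : Set (EuclideanSpace ℝ (Fin n))) (a : ℝ) : Prop :=
  ∀ x ∈ D, ∀ y ∈ D, ∃ γ : Arc n D, γ.Joins x y ∧ γ.IsConeArc a

/-- `D` is a `c`-uniform domain. -/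
def IsUniform {n : ℕ} (D : Set (EuclideanSpace ℝ (Fin n))) (c : ℝ) : Prop :=
  ∀ x ∈ D, ∀ y ∈ D, ∃ γ : Arc n D, γ.Joins x y ∧ γ.IsConeArc c ∧ γ.len ≤ c * dist x y

/-- `f : D → D'` is an `(M,C)`-CQH homeomorphism (a homeomorphism of `D` onto `D'`
satisfying the coarse quasihyperbolic bi-Lipschitz condition). -/
def IsCQH {n : ℕ} (D D' : Set (EuclideanSpace ℝ (Fin n)))
    (f : EuclideanSpace ℝ (Fin n) → EuclideanSpace ℝ (Fin n)) (M C : ℝ) : Prop :=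
  ContinuousOn f D ∧ BijOn f D D' ∧
  ∀ x ∈ D, ∀ y ∈ D,
    (qhDist D x y - C) / M ≤ qhDist D' (f x) (f y) ∧
    qhDist D' (f x) (f y) ≤ M * qhDist D x y + C

/-! Put `m = d'(f w)` and `Φ = ℓ_k(β[p,q])`. Cutting `β[p,q]` into `⌈Φ⌉ + 1` pieces of
quasihyperbolic length `≤ 1`, each image piece has quasihyperbolic diameter `≤ M + C` and, as
`d' ≤ m` along `f(β)`, euclidean diameter `≤ e^{M+C} m`; so `|f p - f q| ≲ (Φ + 2) m`. Since
`d'(f p), d'(f q) ≥ m / 2`, uniformity of `D'` gives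
`k'(f p, f q) ≲ log (1 + |f p - f q| / m) ≲ √(Φ + 2)`, whereas the quasigeodesic property of `β`
and the CQH lower bound give `Φ ≲ k'(f p, f q) + 1`. Hence `Φ` is bounded in terms of
`a, c, M, C`, so `f(β[p,q])` has bounded quasihyperbolic diameter, and
`|x - y| ≤ (e^{k'(x,y)} - 1) d'(x)` turns this into the three estimates. -/

variable {n : ℕ}

lemma distBd_pos {D : Set (EuclideanSpace ℝ (Fin n))} (hD : IsOpen D) (hne : D ≠ univ)
    {z : EuclideanSpace ℝ (Fin n)} (hz : z ∈ D) : 0 < distBd D z :=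
  (hD.isClosed_compl.notMem_iff_infDist_pos (nonempty_compl.2 hne)).1 (notMem_compl_iff.2 hz)

lemma distBd_le_add_dist (D : Set (EuclideanSpace ℝ (Fin n))) (x y : EuclideanSpace ℝ (Fin n)) :
    distBd D x ≤ distBd D y + dist x y :=
  infDist_le_infDist_add_dist

namespace Arc

variable {D : Set (EuclideanSpace ℝ (Fin n))} (γ : Arc n D)

lemma dist_le_sub {s t : ℝ} (hs : s ∈ Icc 0 γ.len) (ht : t ∈ Icc 0 γ.len) (hst : s ≤ t) :
    dist (γ.toFun s) (γ.toFun t) ≤ t - s := by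
  have h := eVariationOn.edist_le γ.toFun (left_mem_Icc.2 hst) (right_mem_Icc.2 hst)
  rw [γ.unitSpeed s hs t ht hst, edist_dist] at h
  exact (ENNReal.ofReal_le_ofReal_iff (sub_nonneg.2 hst)).1 h

lemma lipschitzOnWith : LipschitzOnWith 1 γ.toFun (Icc 0 γ.len) := by
  refine LipschitzOnWith.of_dist_le_mul fun s hs t ht => ?_
  rw [NNReal.coe_one, one_mul, Real.dist_eq]
  rcases le_total s t with hst | hts
  · exact (γ.dist_le_sub hs ht hst).trans (by rw [abs_sub_comm]; exact le_abs_self _)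
  · exact (dist_comm _ _).trans_le ((γ.dist_le_sub ht hs hts).trans (le_abs_self _))

lemma intervalIntegrable_inv_distBd (hD : IsOpen D) (hne : D ≠ univ) {u v : ℝ}
    (hu : u ∈ Icc 0 γ.len) (hv : v ∈ Icc 0 γ.len) :
    IntervalIntegrable (fun t => 1 / distBd D (γ.toFun t)) volume u v := by
  refine ContinuousOn.intervalIntegrable (ContinuousOn.mono ?_ (uIcc_subset_Icc hu hv))
  exact continuousOn_const.div ((continuous_infDist_pt _).comp_continuousOn
    γ.lipschitzOnWith.continuousOn) fun t ht => (distBd_pos hD hne (γ.mem t ht)).ne'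

lemma qhLen_nonneg {u v : ℝ} (huv : u ≤ v) : 0 ≤ γ.qhLen u v :=
  intervalIntegral.integral_nonneg huv fun _ _ => one_div_nonneg.2 infDist_nonneg

lemma qhLen_add (hD : IsOpen D) (hne : D ≠ univ) {s u t : ℝ}
    (hs : s ∈ Icc 0 γ.len) (hu : u ∈ Icc 0 γ.len) (ht : t ∈ Icc 0 γ.len) :
    γ.qhLen s u + γ.qhLen u t = γ.qhLen s t :=
  intervalIntegral.integral_add_adjacent_intervals
    (γ.intervalIntegrable_inv_distBd hD hne hs hu) (γ.intervalIntegrable_inv_distBd hD hne hu ht)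

lemma qhLen_mono (hD : IsOpen D) (hne : D ≠ univ) {a b s t : ℝ} (ha : a ∈ Icc 0 γ.len)
    (hb : b ∈ Icc 0 γ.len) (has : a ≤ s) (hst : s ≤ t) (htb : t ≤ b) :
    γ.qhLen s t ≤ γ.qhLen a b :=
  intervalIntegral.integral_mono_interval has hst htb
    (Filter.Eventually.of_forall fun _ => one_div_nonneg.2 infDist_nonneg)
    (γ.intervalIntegrable_inv_distBd hD hne ha hb)

lemma continuousOn_qhLen (hD : IsOpen D) (hne : D ≠ univ) {s t : ℝ} (hs : s ∈ Icc 0 γ.len)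
    (ht : t ∈ Icc 0 γ.len) (hst : s ≤ t) : ContinuousOn (γ.qhLen s) (Icc s t) := by
  have := intervalIntegral.continuousOn_primitive_interval'
    (γ.intervalIntegrable_inv_distBd hD hne hs ht) left_mem_uIcc
  rwa [uIcc_of_le hst] at this

def subarc {s t : ℝ} (hs : s ∈ Icc 0 γ.len) (ht : t ∈ Icc 0 γ.len) (hst : s ≤ t) :
    Arc n D where
  len := t - s
  len_nonneg := sub_nonneg.2 hst
  toFun u := γ.toFun (u + s)
  injOn u hu v hv huv := by
    have hu' : u + s ∈ Icc 0 γ.len := ⟨by linarith [hu.1, hs.1], by linarith [hu.2, ht.2]⟩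
    have hv' : v + s ∈ Icc 0 γ.len := ⟨by linarith [hv.1, hs.1], by linarith [hv.2, ht.2]⟩
    exact add_right_cancel (γ.injOn hu' hv' huv)
  mem u hu := γ.mem _ ⟨by linarith [hu.1, hs.1], by linarith [hu.2, ht.2]⟩
  unitSpeed u hu v hv huv := by
    rw [show (fun w => γ.toFun (w + s)) = γ.toFun ∘ (· + s) from rfl,
      eVariationOn.comp_eq_of_monotoneOn γ.toFun (· + s) fun _ _ _ _ hxy => by simpa using hxy,
      image_add_const_Icc, γ.unitSpeed _ ⟨by linarith [hu.1, hs.1], by linarith [hu.2, ht.2]⟩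
        _ ⟨by linarith [hv.1, hs.1], by linarith [hv.2, ht.2]⟩ (by linarith)]
    ring_nf

def reverse : Arc n D where
  len := γ.len
  len_nonneg := γ.len_nonneg
  toFun u := γ.toFun (γ.len - u)
  injOn u hu v hv huv := by
    have hu' : γ.len - u ∈ Icc 0 γ.len := ⟨by linarith [hu.2], by linarith [hu.1]⟩
    have hv' : γ.len - v ∈ Icc 0 γ.len := ⟨by linarith [hv.2], by linarith [hv.1]⟩
    exact sub_right_injective (γ.injOn hu' hv' huv)
  mem u hu := γ.mem _ ⟨by linarith [hu.2], by linarith [hu.1]⟩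
  unitSpeed u hu v hv huv := by
    rw [show (fun w => γ.toFun (γ.len - w)) = γ.toFun ∘ (γ.len - ·) from rfl,
      eVariationOn.comp_eq_of_antitoneOn γ.toFun (γ.len - ·)
        fun _ _ _ _ hxy => sub_le_sub_left hxy _,
      image_const_sub_Icc, γ.unitSpeed _ ⟨by linarith [hv.2], by linarith [hv.1]⟩
        _ ⟨by linarith [hu.2], by linarith [hu.1]⟩ (by linarith)]
    ring_nf

lemma subarc_joins {s t : ℝ} (hs : s ∈ Icc 0 γ.len) (ht : t ∈ Icc 0 γ.len) (hst : s ≤ t) :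
    (γ.subarc hs ht hst).Joins (γ.toFun s) (γ.toFun t) :=
  ⟨congrArg γ.toFun (zero_add s), congrArg γ.toFun (sub_add_cancel t s)⟩

lemma subarc_qhLen {s t : ℝ} (hs : s ∈ Icc 0 γ.len) (ht : t ∈ Icc 0 γ.len) (hst : s ≤ t) :
    (γ.subarc hs ht hst).qhLen 0 (γ.subarc hs ht hst).len = γ.qhLen s t := by
  show (∫ u in (0 : ℝ)..t - s, 1 / distBd D (γ.toFun (u + s))) = _
  rw [intervalIntegral.integral_comp_add_right (fun v => 1 / distBd D (γ.toFun v)),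
    zero_add, sub_add_cancel]
  rfl

lemma Joins.reverse {x y : EuclideanSpace ℝ (Fin n)} (h : γ.Joins x y) : γ.reverse.Joins y x :=
  ⟨by simpa [Arc.reverse] using h.2, by simpa [Arc.reverse] using h.1⟩

lemma reverse_qhLen (u v : ℝ) : γ.reverse.qhLen u v = γ.qhLen (γ.len - v) (γ.len - u) :=
  intervalIntegral.integral_comp_sub_left (fun w => 1 / distBd D (γ.toFun w)) γ.len

lemma IsConeArc.reverse {c : ℝ} (h : γ.IsConeArc c) : γ.reverse.IsConeArc c := by
  intro t (ht : t ∈ Icc 0 γ.len)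
  have := h (γ.len - t) ⟨by linarith [ht.2], by linarith [ht.1]⟩
  rwa [sub_sub_cancel, min_comm] at this

end Arc

lemma Arc.Joins.qhDist_le {D : Set (EuclideanSpace ℝ (Fin n))} {γ : Arc n D}
    {x y : EuclideanSpace ℝ (Fin n)} (h : γ.Joins x y) : qhDist D x y ≤ γ.qhLen 0 γ.len :=
  csInf_le ⟨0, by rintro r ⟨γ, -, rfl⟩; exact γ.qhLen_nonneg γ.len_nonneg⟩ ⟨γ, h, rfl⟩

lemma qhDist_comm (D : Set (EuclideanSpace ℝ (Fin n))) (x y : EuclideanSpace ℝ (Fin n)) :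
    qhDist D x y = qhDist D y x := by
  have key : ∀ x y : EuclideanSpace ℝ (Fin n),
      { r | ∃ γ : Arc n D, γ.Joins x y ∧ r = γ.qhLen 0 γ.len } ⊆
        { r | ∃ γ : Arc n D, γ.Joins y x ∧ r = γ.qhLen 0 γ.len } := by
    rintro x y r ⟨γ, hγ, rfl⟩
    exact ⟨γ.reverse, hγ.reverse, by
      rw [γ.reverse_qhLen]; exact congrArg₂ γ.qhLen (sub_self _).symm (sub_zero _).symm⟩
  exact congrArg sInf ((key x y).antisymm (key y x))

lemma Arc.qhDist_le_qhLen {D : Set (EuclideanSpace ℝ (Fin n))} (γ : Arc n D) {s t : ℝ}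
    (hs : s ∈ Icc 0 γ.len) (ht : t ∈ Icc 0 γ.len) (hst : s ≤ t) :
    qhDist D (γ.toFun s) (γ.toFun t) ≤ γ.qhLen s t :=
  γ.subarc_qhLen hs ht hst ▸ (γ.subarc_joins hs ht hst).qhDist_le

lemma integral_inv_const_add {ρ T : ℝ} (hρ : 0 < ρ) (hT : 0 ≤ T) :
    ∫ t in (0 : ℝ)..T, (ρ + t)⁻¹ = Real.log (1 + T / ρ) := by
  rw [intervalIntegral.integral_comp_add_left (fun x => x⁻¹), integral_inv_of_pos (by linarith)
    (by linarith), add_zero, add_div, div_self hρ.ne']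

lemma intervalIntegrable_inv_const_add {ρ T : ℝ} (hρ : 0 < ρ) (hT : 0 ≤ T) :
    IntervalIntegrable (fun t => (ρ + t)⁻¹) volume 0 T :=
  intervalIntegral.intervalIntegrable_inv (fun t ht => by
    rw [uIcc_of_le hT] at ht; linarith [ht.1]) (by fun_prop)

namespace Arc

variable {D : Set (EuclideanSpace ℝ (Fin n))} (γ : Arc n D)

/-- Since `d` is `1`-Lipschitz, `d(γ t) ≤ d(γ 0) + t`; integrating `1 / d` along `γ` gives the
logarithm. -/
lemma log_one_add_dist_div_le_qhLen (hD : IsOpen D) (hne : D ≠ univ) :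
    Real.log (1 + dist (γ.toFun 0) (γ.toFun γ.len) / distBd D (γ.toFun 0)) ≤
      γ.qhLen 0 γ.len := by
  set ρ := distBd D (γ.toFun 0)
  have h0 : (0 : ℝ) ∈ Icc 0 γ.len := left_mem_Icc.2 γ.len_nonneg
  have hρ : 0 < ρ := distBd_pos hD hne (γ.mem 0 h0)
  have hdist : dist (γ.toFun 0) (γ.toFun γ.len) ≤ γ.len := by
    simpa using γ.dist_le_sub h0 (right_mem_Icc.2 γ.len_nonneg) γ.len_nonneg
  have hcmp : ∀ t ∈ Icc 0 γ.len, (ρ + t)⁻¹ ≤ 1 / distBd D (γ.toFun t) := by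
    intro t ht
    rw [one_div]
    refine inv_anti₀ (distBd_pos hD hne (γ.mem t ht)) ?_
    calc distBd D (γ.toFun t) ≤ ρ + dist (γ.toFun t) (γ.toFun 0) := distBd_le_add_dist _ _ _
      _ ≤ ρ + t := by
        gcongr; simpa [dist_comm] using γ.dist_le_sub h0 ht ht.1
  calc Real.log (1 + dist (γ.toFun 0) (γ.toFun γ.len) / ρ)
      ≤ Real.log (1 + γ.len / ρ) := by gcongr
    _ = ∫ t in (0 : ℝ)..γ.len, (ρ + t)⁻¹ := (integral_inv_const_add hρ γ.len_nonneg).symm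
    _ ≤ γ.qhLen 0 γ.len :=
      intervalIntegral.integral_mono_on γ.len_nonneg
        (intervalIntegrable_inv_const_add hρ γ.len_nonneg)
        (γ.intervalIntegrable_inv_distBd hD hne h0 (right_mem_Icc.2 γ.len_nonneg)) hcmp

/-- On the first half of a `c`-cone arc, `d(γ t) ≥ d(γ 0) - t` and `d(γ t) ≥ t / c` combine to
`d(γ 0) + t ≤ 3c · d(γ t)`. -/
lemma qhLen_le_of_isConeArc (hD : IsOpen D) (hne : D ≠ univ) {c : ℝ} (hc : 1 ≤ c)
    (hγ : γ.IsConeArc c) {T : ℝ} (hT0 : 0 ≤ T) (hT : T ≤ γ.len / 2) :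
    γ.qhLen 0 T ≤ 3 * c * Real.log (1 + T / distBd D (γ.toFun 0)) := by
  set ρ := distBd D (γ.toFun 0)
  have h0 : (0 : ℝ) ∈ Icc 0 γ.len := left_mem_Icc.2 γ.len_nonneg
  have hρ : 0 < ρ := distBd_pos hD hne (γ.mem 0 h0)
  have hcmp : ∀ t ∈ Icc 0 T, 1 / distBd D (γ.toFun t) ≤ 3 * c * (ρ + t)⁻¹ := by
    intro t ht
    have ht' : t ∈ Icc 0 γ.len := ⟨ht.1, by linarith [ht.2]⟩
    have hd : 0 < distBd D (γ.toFun t) := distBd_pos hD hne (γ.mem t ht')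
    have hlip : ρ ≤ distBd D (γ.toFun t) + t := by
      linarith [distBd_le_add_dist D (γ.toFun 0) (γ.toFun t), γ.dist_le_sub h0 ht' ht.1]
    have hcone : t ≤ c * distBd D (γ.toFun t) := by
      simpa [min_eq_left (by linarith [ht.2] : t ≤ γ.len - t)] using hγ t ht'
    rw [← div_eq_mul_inv, div_le_div_iff₀ hd (by linarith [ht.1])]
    nlinarith
  calc γ.qhLen 0 T ≤ ∫ t in (0 : ℝ)..T, 3 * c * (ρ + t)⁻¹ :=
        intervalIntegral.integral_mono_on hT0
          (γ.intervalIntegrable_inv_distBd hD hne h0 ⟨hT0, by linarith [γ.len_nonneg]⟩)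
          ((intervalIntegrable_inv_const_add hρ hT0).const_mul _) hcmp
    _ = 3 * c * Real.log (1 + T / ρ) := by
        rw [intervalIntegral.integral_const_mul, integral_inv_const_add hρ hT0]

end Arc

section QuasihyperbolicDistance

variable {D : Set (EuclideanSpace ℝ (Fin n))} {x y : EuclideanSpace ℝ (Fin n)}

lemma log_one_add_dist_div_le_qhDist (hD : IsOpen D) (hne : D ≠ univ)
    (hjoin : ∃ γ : Arc n D, γ.Joins x y) :
    Real.log (1 + dist x y / distBd D x) ≤ qhDist D x y := by
  obtain ⟨γ, hγ⟩ := hjoin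
  refine le_csInf ⟨_, γ, hγ, rfl⟩ ?_
  rintro r ⟨γ', ⟨rfl, rfl⟩, rfl⟩
  exact γ'.log_one_add_dist_div_le_qhLen hD hne

lemma dist_le_exp_qhDist_sub_one_mul (hD : IsOpen D) (hne : D ≠ univ) (hx : x ∈ D)
    (hjoin : ∃ γ : Arc n D, γ.Joins x y) :
    dist x y ≤ (Real.exp (qhDist D x y) - 1) * distBd D x := by
  have hρ := distBd_pos hD hne hx
  have h := log_one_add_dist_div_le_qhDist hD hne hjoin
  rw [Real.log_le_iff_le_exp (by positivity), ← le_sub_iff_add_le', div_le_iff₀ hρ] at h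
  exact h

lemma qhDist_le_of_isUniform (hD : IsOpen D) (hne : D ≠ univ) {c : ℝ} (hc : 1 ≤ c)
    (hU : IsUniform D c) (hx : x ∈ D) (hy : y ∈ D) {m : ℝ} (hm : 0 < m)
    (hmx : m ≤ distBd D x) (hmy : m ≤ distBd D y) :
    qhDist D x y ≤ 6 * c * Real.log (1 + c * dist x y / m) := by
  obtain ⟨γ, hγ, hcone, hlen⟩ := hU x hx y hy
  set L := γ.len
  have hL0 : 0 ≤ L / 2 := by linarith [γ.len_nonneg]
  have hL : L / 2 ≤ L := by linarith
  have half_le : ∀ ρ, m ≤ ρ → 3 * c * Real.log (1 + L / 2 / ρ) ≤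
      3 * c * Real.log (1 + c * dist x y / m) := by
    intro ρ hρ
    have : L / 2 / ρ ≤ c * dist x y / m :=
      div_le_div₀ (by positivity) (by linarith) hm hρ
    have : 0 ≤ L / 2 / ρ := div_nonneg hL0 (hm.le.trans hρ)
    gcongr
  have hfirst := γ.qhLen_le_of_isConeArc hD hne hc hcone hL0 le_rfl
  have hsecond := γ.reverse.qhLen_le_of_isConeArc hD hne hc hcone.reverse (T := L / 2)
    hL0 le_rfl
  rw [γ.reverse_qhLen, hγ.reverse.1, sub_zero] at hsecond
  rw [hγ.1] at hfirst
  calc qhDist D x y ≤ γ.qhLen 0 L := hγ.qhDist_le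
    _ = γ.qhLen 0 (L / 2) + γ.qhLen (L / 2) L :=
      (γ.qhLen_add hD hne (left_mem_Icc.2 γ.len_nonneg) ⟨hL0, hL⟩
        (right_mem_Icc.2 γ.len_nonneg)).symm
    _ ≤ 6 * c * Real.log (1 + c * dist x y / m) := by
      have := half_le _ hmx
      have := half_le _ hmy
      rw [show L - L / 2 = L / 2 by ring] at hsecond
      linarith

end QuasihyperbolicDistance

lemma log_one_add_le_two_mul_sqrt {x : ℝ} (hx : 0 ≤ x) : Real.log (1 + x) ≤ 2 * √x := by
  have hs : 0 ≤ √x := Real.sqrt_nonneg x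
  calc Real.log (1 + x) ≤ Real.log ((1 + √x) ^ 2) :=
        Real.log_le_log (by positivity) (by nlinarith [Real.sq_sqrt hx])
    _ = 2 * Real.log (1 + √x) := by rw [Real.log_pow]; norm_num
    _ ≤ 2 * √x := by linarith [Real.log_le_sub_one_of_pos (by positivity : 0 < 1 + √x)]

lemma IsUniform.exists_joins {D : Set (EuclideanSpace ℝ (Fin n))} {c : ℝ} (hU : IsUniform D c)
    {x y : EuclideanSpace ℝ (Fin n)} (hx : x ∈ D) (hy : y ∈ D) : ∃ γ : Arc n D, γ.Joins x y :=
  let ⟨γ, hγ, _⟩ := hU x hx y hy; ⟨γ, hγ⟩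

/-- Cut `γ[a,b]` into pieces of quasihyperbolic length `1`. -/
lemma Arc.dist_le_of_qhLen_le_natCast {D : Set (EuclideanSpace ℝ (Fin n))} (γ : Arc n D)
    (hD : IsOpen D) (hne : D ≠ univ) {X : Type*} [PseudoMetricSpace X] {g : ℝ → X} {δ : ℝ}
    (hδ : 0 ≤ δ) {a b : ℝ} (ha : a ∈ Icc 0 γ.len) (hb : b ∈ Icc 0 γ.len)
    (hstep : ∀ s t, a ≤ s → s ≤ t → t ≤ b → γ.qhLen s t ≤ 1 → dist (g s) (g t) ≤ δ)
    (N : ℕ) : ∀ s t, a ≤ s → s ≤ t → t ≤ b → γ.qhLen s t ≤ N →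
      dist (g s) (g t) ≤ (N + 1) * δ := by
  induction N with
  | zero =>
    intro s t has hst htb h
    simpa using hstep s t has hst htb (h.trans (by norm_num))
  | succ N ih =>
    intro s t has hst htb h
    by_cases hle : γ.qhLen s t ≤ 1
    · exact (hstep s t has hst htb hle).trans (le_mul_of_one_le_left hδ (by linarith))
    have hs : s ∈ Icc 0 γ.len := ⟨ha.1.trans has, (hst.trans htb).trans hb.2⟩
    have ht : t ∈ Icc 0 γ.len := ⟨(ha.1.trans has).trans hst, htb.trans hb.2⟩
    obtain ⟨u, hu, hsu⟩ := intermediate_value_Icc hst (γ.continuousOn_qhLen hD hne hs ht hst)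
      ⟨(intervalIntegral.integral_same : γ.qhLen s s = 0).trans_le zero_le_one, (not_le.1 hle).le⟩
    have hut : γ.qhLen u t ≤ N := by
      have := γ.qhLen_add hD hne hs ⟨hs.1.trans hu.1, hu.2.trans ht.2⟩ ht
      push_cast at h
      linarith
    calc dist (g s) (g t) ≤ dist (g s) (g u) + dist (g u) (g t) := dist_triangle _ _ _
      _ ≤ δ + (N + 1) * δ :=
        add_le_add (hstep s u has hu.1 (hu.2.trans htb) hsu.le)
          (ih u t (has.trans hu.1) hu.2 htb hut)
      _ = (↑(N + 1) + 1) * δ := by push_cast; ring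

lemma Arc.dist_le_qhLen_add_two_mul {D : Set (EuclideanSpace ℝ (Fin n))} (γ : Arc n D)
    (hD : IsOpen D) (hne : D ≠ univ) {X : Type*} [PseudoMetricSpace X] {g : ℝ → X} {δ : ℝ}
    (hδ : 0 ≤ δ) {a b : ℝ} (ha : a ∈ Icc 0 γ.len) (hb : b ∈ Icc 0 γ.len) (hab : a ≤ b)
    (hstep : ∀ s t, a ≤ s → s ≤ t → t ≤ b → γ.qhLen s t ≤ 1 → dist (g s) (g t) ≤ δ) :
    dist (g a) (g b) ≤ (γ.qhLen a b + 2) * δ := by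
  refine (γ.dist_le_of_qhLen_le_natCast hD hne hδ ha hb hstep ⌈γ.qhLen a b⌉₊ a b le_rfl hab
    le_rfl (Nat.le_ceil _)).trans ?_
  have := Nat.ceil_lt_add_one (γ.qhLen_nonneg hab)
  exact mul_le_mul_of_nonneg_right (by linarith) hδ

namespace IsCQH

variable {D D' : Set (EuclideanSpace ℝ (Fin n))}
  {f : EuclideanSpace ℝ (Fin n) → EuclideanSpace ℝ (Fin n)} {M C : ℝ}

lemma qhDist_le_image (hf : IsCQH D D' f M C) (hM : 0 < M) {x y : EuclideanSpace ℝ (Fin n)}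
    (hx : x ∈ D) (hy : y ∈ D) : qhDist D x y ≤ M * qhDist D' (f x) (f y) + C := by
  have := (hf.2.2 x hx y hy).1
  rw [div_le_iff₀ hM] at this
  linarith

lemma qhDist_image_le_qhLen (hf : IsCQH D D' f M C) (hM : 0 ≤ M) (β : Arc n D) {s t : ℝ}
    (hs : s ∈ Icc 0 β.len) (ht : t ∈ Icc 0 β.len) (hst : s ≤ t) :
    qhDist D' (f (β.toFun s)) (f (β.toFun t)) ≤ M * β.qhLen s t + C :=
  (hf.2.2 _ (β.mem s hs) _ (β.mem t ht)).2.trans (by gcongr; exact β.qhDist_le_qhLen hs ht hst)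

lemma qhDist_image_le_of_mem_Icc (hf : IsCQH D D' f M C) (hD : IsOpen D) (hne : D ≠ univ)
    (hM : 0 ≤ M) (β : Arc n D) {a b : ℝ} (ha : a ∈ Icc 0 β.len) (hb : b ∈ Icc 0 β.len)
    {s u : ℝ} (hs : s ∈ Icc a b) (hu : u ∈ Icc a b) :
    qhDist D' (f (β.toFun s)) (f (β.toFun u)) ≤ M * β.qhLen a b + C := by
  have hsub := Icc_subset_Icc ha.1 hb.2
  rcases le_total s u with h | h
  · refine (hf.qhDist_image_le_qhLen hM β (hsub hs) (hsub hu) h).trans ?_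
    gcongr
    exact β.qhLen_mono hD hne ha hb hs.1 h hu.2
  · rw [qhDist_comm]
    refine (hf.qhDist_image_le_qhLen hM β (hsub hu) (hsub hs) h).trans ?_
    gcongr
    exact β.qhLen_mono hD hne ha hb hu.1 h hs.2

/-- A piece of `β` of quasihyperbolic length `≤ 1` has image of quasihyperbolic diameter
`≤ M + C`, hence of euclidean diameter `≤ e^{M+C} m`. -/
lemma dist_image_le_qhLen_add_two_mul (hf : IsCQH D D' f M C) (hD : IsOpen D) (hne : D ≠ univ)
    (hD' : IsOpen D') (hne' : D' ≠ univ) {c : ℝ} (hU : IsUniform D' c) (hM : 0 ≤ M)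
    (β : Arc n D) {a b : ℝ} (ha : a ∈ Icc 0 β.len) (hb : b ∈ Icc 0 β.len) (hab : a ≤ b)
    {m : ℝ} (hm : 0 ≤ m) (hbd : ∀ u ∈ Icc a b, distBd D' (f (β.toFun u)) ≤ m) :
    dist (f (β.toFun a)) (f (β.toFun b)) ≤ (β.qhLen a b + 2) * (Real.exp (M + C) * m) := by
  refine β.dist_le_qhLen_add_two_mul hD hne (g := fun u => f (β.toFun u)) (by positivity) ha hb hab
    fun s t has hst htb h1 => ?_
  have hs : s ∈ Icc 0 β.len := ⟨ha.1.trans has, (hst.trans htb).trans hb.2⟩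
  have ht : t ∈ Icc 0 β.len := ⟨(ha.1.trans has).trans hst, htb.trans hb.2⟩
  have hfs := hf.2.1.mapsTo (β.mem s hs)
  have hk : qhDist D' (f (β.toFun s)) (f (β.toFun t)) ≤ M + C :=
    (hf.qhDist_image_le_qhLen hM β hs ht hst).trans (by nlinarith)
  calc dist (f (β.toFun s)) (f (β.toFun t))
      ≤ (Real.exp (qhDist D' (f (β.toFun s)) (f (β.toFun t))) - 1) * distBd D' (f (β.toFun s)) :=
        dist_le_exp_qhDist_sub_one_mul hD' hne' hfs
          (hU.exists_joins hfs (hf.2.1.mapsTo (β.mem t ht)))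
    _ ≤ Real.exp (M + C) * m :=
        mul_le_mul (by linarith [Real.exp_le_exp.2 hk]) (hbd s ⟨has, hst.trans htb⟩)
          infDist_nonneg (Real.exp_pos _).le

lemma dist_image_le_of_mem_Icc (hf : IsCQH D D' f M C) (hD : IsOpen D) (hne : D ≠ univ)
    (hD' : IsOpen D') (hne' : D' ≠ univ) {c : ℝ} (hU : IsUniform D' c) (hM : 0 ≤ M)
    (β : Arc n D) {a b : ℝ} (ha : a ∈ Icc 0 β.len) (hb : b ∈ Icc 0 β.len)
    {s u : ℝ} (hs : s ∈ Icc a b) (hu : u ∈ Icc a b) :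
    dist (f (β.toFun s)) (f (β.toFun u)) ≤
      (Real.exp (M * β.qhLen a b + C) - 1) * distBd D' (f (β.toFun s)) := by
  have hsub := Icc_subset_Icc ha.1 hb.2
  have hfs := hf.2.1.mapsTo (β.mem s (hsub hs))
  refine (dist_le_exp_qhDist_sub_one_mul hD' hne' hfs
    (hU.exists_joins hfs (hf.2.1.mapsTo (β.mem u (hsub hu))))).trans ?_
  gcongr
  · exact infDist_nonneg
  · exact hf.qhDist_image_le_of_mem_Icc hD hne hM β ha hb hs hu

end IsCQH

/-- The a priori bound on `ℓ_k(β[p,q])`; it is `(P + Q) ^ 2` for the coefficients of the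
inequality `Φ + 2 ≤ P √(Φ + 2) + Q` established in `Arc.qhLen_le_qhLenBound`. -/
def qhLenBound (a c M C : ℝ) : ℝ :=
  (48 * a ^ 2 * M * c * √(2 * c * Real.exp (M + C)) + (4 * a ^ 2 * C + 4 * a ^ 2 + 2)) ^ 2

lemma Arc.qhLen_le_qhLenBound {D D' : Set (EuclideanSpace ℝ (Fin n))}
    {f : EuclideanSpace ℝ (Fin n) → EuclideanSpace ℝ (Fin n)} {a c M C : ℝ}
    (hD : IsOpen D) (hne : D ≠ univ) (hD' : IsOpen D') (hne' : D' ≠ univ) (hc : 1 ≤ c)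
    (hU : IsUniform D' c) (hM : 0 < M) (hC : 0 ≤ C) (hf : IsCQH D D' f M C) (β : Arc n D)
    {tp tq : ℝ} (htp : tp ∈ Icc 0 β.len) (htq : tq ∈ Icc 0 β.len) (hpq : tp ≤ tq)
    (hβ : β.qhLen tp tq ≤ 4 * a ^ 2 * qhDist D (β.toFun tp) (β.toFun tq) + 4 * a ^ 2)
    {m : ℝ} (hm : 0 < m) (hbd : ∀ u ∈ Icc tp tq, distBd D' (f (β.toFun u)) ≤ m)
    (hp : m / 2 ≤ distBd D' (f (β.toFun tp))) (hq : m / 2 ≤ distBd D' (f (β.toFun tq))) :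
    β.qhLen tp tq ≤ qhLenBound a c M C := by
  set Φ := β.qhLen tp tq
  set E := Real.exp (M + C)
  set p' := f (β.toFun tp)
  set q' := f (β.toFun tq)
  have hΦ : 0 ≤ Φ := β.qhLen_nonneg hpq
  have hchain : dist p' q' ≤ (Φ + 2) * (E * m) :=
    hf.dist_image_le_qhLen_add_two_mul hD hne hD' hne' hU hM.le β htp htq hpq hm.le hbd
  have hk : qhDist D' p' q' ≤ 12 * c * √(2 * c * E) * √(Φ + 2) := by
    have harg : c * dist p' q' / (m / 2) ≤ 2 * c * E * (Φ + 2) := by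
      rw [div_le_iff₀ (by positivity)]
      nlinarith
    calc qhDist D' p' q' ≤ 6 * c * Real.log (1 + c * dist p' q' / (m / 2)) :=
          qhDist_le_of_isUniform hD' hne' hc hU (hf.2.1.mapsTo (β.mem tp htp))
            (hf.2.1.mapsTo (β.mem tq htq)) (by positivity) hp hq
      _ ≤ 6 * c * Real.log (1 + 2 * c * E * (Φ + 2)) := by gcongr
      _ ≤ 6 * c * (2 * √(2 * c * E * (Φ + 2))) := by
          gcongr
          exact log_one_add_le_two_mul_sqrt (by positivity)
      _ = 12 * c * √(2 * c * E) * √(Φ + 2) := by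
          rw [Real.sqrt_mul (by positivity)]
          ring
  have hquasi : Φ ≤ 4 * a ^ 2 * (M * qhDist D' p' q' + C) + 4 * a ^ 2 :=
    hβ.trans (by gcongr; exact hf.qhDist_le_image hM (β.mem tp htp) (β.mem tq htq))
  set P := 48 * a ^ 2 * M * c * √(2 * c * E)
  set Q := 4 * a ^ 2 * C + 4 * a ^ 2 + 2
  set x := √(Φ + 2)
  have hx : x ^ 2 = Φ + 2 := Real.sq_sqrt (by linarith)
  have hx1 : 1 ≤ x := Real.one_le_sqrt.2 (by linarith)
  have hxPQ : x ≤ P + Q := by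
    have hP : 0 ≤ P := by positivity
    have hQ : 0 ≤ Q := by positivity
    have hk' : 4 * a ^ 2 * M * qhDist D' p' q' ≤ P * x := by
      calc 4 * a ^ 2 * M * qhDist D' p' q' ≤ 4 * a ^ 2 * M * (12 * c * √(2 * c * E) * x) := by
            gcongr
        _ = P * x := by ring
    nlinarith
  calc Φ ≤ x ^ 2 := by linarith
    _ ≤ (P + Q) ^ 2 := by gcongr

theorem corollary_3_9_general
    (a c M C : ℝ) (hc : 1 ≤ c) (hM : 1 ≤ M) (hC : 0 ≤ C) :
    ∃ a₂ > 0, ∀ (n : ℕ), 2 ≤ n →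
      ∀ (D D' : Set (EuclideanSpace ℝ (Fin n)))
        (f : EuclideanSpace ℝ (Fin n) → EuclideanSpace ℝ (Fin n)),
        IsProperDomain D → IsProperDomain D' → IsUniform D' c →
        IsCQH D D' f M C →
        ∀ (β : Arc n D),
          (∀ s ∈ Icc (0:ℝ) β.len, ∀ t ∈ Icc (0:ℝ) β.len, s ≤ t →
            β.qhLen s t ≤ 4 * a ^ 2 * qhDist D (β.toFun s) (β.toFun t) + 4 * a ^ 2) →
          ∀ tp ∈ Icc (0:ℝ) β.len, ∀ tq ∈ Icc (0:ℝ) β.len, tp ≤ tq →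
            ∀ tw ∈ Icc tp tq,
              (∀ u ∈ Icc (0:ℝ) β.len,
                distBd D' (f (β.toFun u)) ≤ distBd D' (f (β.toFun tw))) →
              distBd D' (f (β.toFun tw)) / 2 ≤ distBd D' (f (β.toFun tp)) →
              distBd D' (f (β.toFun tw)) / 2 ≤ distBd D' (f (β.toFun tq)) →
              ∀ t ∈ Icc tp tq,
                distBd D' (f (β.toFun tw)) ≤ a₂ * distBd D' (f (β.toFun t)) ∧
                dist (f (β.toFun tp)) (f (β.toFun tq)) ≤ a₂ * distBd D' (f (β.toFun t)) ∧
                max (dist (f (β.toFun tp)) (f (β.toFun t)))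
                    (dist (f (β.toFun tq)) (f (β.toFun t)))
                  ≤ a₂ * distBd D' (f (β.toFun t)) := by
  set Ψ := M * qhLenBound a c M C + C
  refine ⟨2 * Real.exp Ψ, by positivity, ?_⟩
  intro n _ D D' f hD hD' hU hf β hβ tp htp tq htq hpq tw htw hmax hp hq t ht
  have hM0 : 0 ≤ M := by linarith
  have hsub : Icc tp tq ⊆ Icc 0 β.len := Icc_subset_Icc htp.1 htq.2
  have hfβ : ∀ u ∈ Icc tp tq, f (β.toFun u) ∈ D' := fun u hu => hf.2.1.mapsTo (β.mem u (hsub hu))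
  have hΦ := β.qhLen_le_qhLenBound hD.1 hD.2.2 hD'.1 hD'.2.2 hc hU (by linarith) hC hf htp htq
    hpq (hβ tp htp tq htq hpq) (distBd_pos hD'.1 hD'.2.2 (hfβ tw htw))
    (fun u hu => hmax u (hsub hu)) hp hq
  set d := distBd D' (f (β.toFun t))
  have hd : 0 < d := distBd_pos hD'.1 hD'.2.2 (hfβ t ht)
  have hclose : ∀ u ∈ Icc tp tq, dist (f (β.toFun t)) (f (β.toFun u)) ≤ (Real.exp Ψ - 1) * d :=
    fun u hu => (hf.dist_image_le_of_mem_Icc hD.1 hD.2.2 hD'.1 hD'.2.2 hU hM0 β htp htq ht hu).trans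
      (mul_le_mul_of_nonneg_right (sub_le_sub_right (Real.exp_le_exp.2
        (by linarith [mul_le_mul_of_nonneg_left hΦ hM0])) 1) hd.le)
  have hw := hclose tw htw
  have hp' := hclose tp (left_mem_Icc.2 hpq)
  have hq' := hclose tq (right_mem_Icc.2 hpq)
  rw [dist_comm] at hp' hq'
  have hexp_d : 0 ≤ Real.exp Ψ * d := by positivity
  refine ⟨?_, ?_, max_le (by linarith) (by linarith)⟩
  · linarith [distBd_le_add_dist D' (f (β.toFun tw)) (f (β.toFun t)),
      dist_comm (f (β.toFun tw)) (f (β.toFun t))]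
  · linarith [dist_triangle_right (f (β.toFun tp)) (f (β.toFun tq)) (f (β.toFun t))]

/-- **Corollary 3.9.** Let `D ⊊ ℝⁿ` (`n ≥ 2`) be a domain, `D' ⊊ ℝⁿ` a `c`-uniform domain,
and `f : D → D'` an `(M,C)`-CQH homeomorphism.  Let `β` be an arc in `D` satisfying
`ℓ_k(β[s₁,s₂]) ≤ 4a²·k_D(s₁,s₂) + 4a²` for all `s₁, s₂ ∈ β`, let `p = β(tp)`, `q = β(tq)`
with `tp ≤ tq`, and let `w = β(tw) ∈ β[p,q]` maximize `d'(f ·)` over `β`, with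
`d'(f p) ≥ d'(f w)/2` and `d'(f q) ≥ d'(f w)/2`.  Then there is `a₂ > 0`, depending only on
`a, c, M, C`, bounding the stated quantities. -/
theorem corollary_3_9
    (a c M C : ℝ) (ha : 1 ≤ a) (hc : 1 ≤ c) (hM : 1 ≤ M) (hC : 0 ≤ C) :
    ∃ a₂ > 0, ∀ (n : ℕ), 2 ≤ n →
      ∀ (D D' : Set (EuclideanSpace ℝ (Fin n)))
        (f : EuclideanSpace ℝ (Fin n) → EuclideanSpace ℝ (Fin n)),
        IsProperDomain D → IsProperDomain D' → IsUniform D' c →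
        IsCQH D D' f M C →
        ∀ (β : Arc n D),
          (∀ s ∈ Icc (0:ℝ) β.len, ∀ t ∈ Icc (0:ℝ) β.len, s ≤ t →
            β.qhLen s t ≤ 4 * a ^ 2 * qhDist D (β.toFun s) (β.toFun t) + 4 * a ^ 2) →
          ∀ tp ∈ Icc (0:ℝ) β.len, ∀ tq ∈ Icc (0:ℝ) β.len, tp ≤ tq →
            ∀ tw ∈ Icc tp tq,
              (∀ u ∈ Icc (0:ℝ) β.len,
                distBd D' (f (β.toFun u)) ≤ distBd D' (f (β.toFun tw))) →
              distBd D' (f (β.toFun tw)) / 2 ≤ distBd D' (f (β.toFun tp)) →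
              distBd D' (f (β.toFun tw)) / 2 ≤ distBd D' (f (β.toFun tq)) →
              ∀ t ∈ Icc tp tq,
                distBd D' (f (β.toFun tw)) ≤ a₂ * distBd D' (f (β.toFun t)) ∧
                dist (f (β.toFun tp)) (f (β.toFun tq)) ≤ a₂ * distBd D' (f (β.toFun t)) ∧
                max (dist (f (β.toFun tp)) (f (β.toFun t)))
                    (dist (f (β.toFun tq)) (f (β.toFun t)))
                  ≤ a₂ * distBd D' (f (β.toFun t)) :=
  corollary_3_9_general a c M C hc hM hC
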